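/- arXiv:math/0405496 — 3 statements merged into one kernel-verified Lean document; each statement's English description precedes it below -/
import Mathlib

section
/- Let H be an inner product space, x_1,…,x_n ∈ H, and δ_{ij} ≥ 0 for 1 ≤ i < j ≤ n such that δ_{ij} ≤ ‖x_i‖·‖x_j‖ − Re⟨x_i, x_j⟩. Then (∑_{i=1}^n ‖x_i‖)² ≥ ‖∑_{i=1}^n x_i‖² + 2 ∑_{1 ≤ i < j ≤ n} δ_{ij}. -/
/-!
Expanding both squares, `(∑ ‖xᵢ‖)² - ‖∑ xᵢ‖² = ∑ᵢ ∑ⱼ (‖xᵢ‖ ‖xⱼ‖ - Re ⟪xᵢ, xⱼ⟫)`. The summand is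
symmetric in `i, j` and vanishes on the diagonal, so the double sum is twice its part over `i < j`,
which dominates `∑_{i<j} δᵢⱼ` term by term.
-/

open Finset RCLike

theorem Finset.sum_sum_eq_two_mul_sum_sum_ite_lt {ι R : Type*} [LinearOrder ι]
    [NonAssocSemiring R] (s : Finset ι) (f : ι → ι → R)
    (hsymm : ∀ i j, f i j = f j i) (hdiag : ∀ i, f i i = 0) :
    ∑ i ∈ s, ∑ j ∈ s, f i j = 2 * ∑ i ∈ s, ∑ j ∈ s, if i < j then f i j else 0 := by
  have hsplit : ∀ i j, f i j = (if i < j then f i j else 0) + if j < i then f j i else 0 := by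
    intro i j
    rcases lt_trichotomy i j with hij | rfl | hij
    · simp [hij, hij.not_gt]
    · simp [hdiag]
    · simp [hij, hij.not_gt, hsymm i j]
  calc ∑ i ∈ s, ∑ j ∈ s, f i j
      = (∑ i ∈ s, ∑ j ∈ s, if i < j then f i j else 0)
        + ∑ i ∈ s, ∑ j ∈ s, if j < i then f j i else 0 := by
        simp only [← sum_add_distrib]
        exact sum_congr rfl fun i _ => sum_congr rfl fun j _ => hsplit i j
    _ = 2 * ∑ i ∈ s, ∑ j ∈ s, if i < j then f i j else 0 := by
        rw [sum_comm (f := fun i j => if j < i then f j i else 0), two_mul]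

section SchwarzDefect

variable (𝕜 : Type*) {H : Type*} [RCLike 𝕜] [NormedAddCommGroup H] [InnerProductSpace 𝕜 H]

noncomputable def schwarzDefect (u v : H) : ℝ :=
  ‖u‖ * ‖v‖ - re (inner 𝕜 u v)

theorem schwarzDefect_self (u : H) : schwarzDefect 𝕜 u u = 0 := by
  simp [schwarzDefect, ← inner_self_eq_norm_mul_norm (𝕜 := 𝕜)]

theorem schwarzDefect_comm (u v : H) : schwarzDefect 𝕜 u v = schwarzDefect 𝕜 v u := by
  rw [schwarzDefect, schwarzDefect, mul_comm, inner_re_symm]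

theorem sq_sum_norm_eq_sq_norm_sum_add_sum_sum_schwarzDefect {ι : Type*} (s : Finset ι)
    (x : ι → H) :
    (∑ i ∈ s, ‖x i‖) ^ 2 =
      ‖∑ i ∈ s, x i‖ ^ 2 + ∑ i ∈ s, ∑ j ∈ s, schwarzDefect 𝕜 (x i) (x j) := by
  have hnorm : ‖∑ i ∈ s, x i‖ ^ 2 = ∑ i ∈ s, ∑ j ∈ s, re (inner 𝕜 (x i) (x j)) := by
    rw [← inner_self_eq_norm_sq (𝕜 := 𝕜), sum_inner, map_sum]
    simp only [inner_sum, map_sum]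
  simp only [hnorm, schwarzDefect, sq, sum_mul_sum, ← sum_add_distrib, add_sub_cancel]

theorem sq_sum_norm_eq_sq_norm_sum_add_two_mul {ι : Type*} [LinearOrder ι] (s : Finset ι)
    (x : ι → H) :
    (∑ i ∈ s, ‖x i‖) ^ 2 = ‖∑ i ∈ s, x i‖ ^ 2 +
      2 * ∑ i ∈ s, ∑ j ∈ s, if i < j then schwarzDefect 𝕜 (x i) (x j) else 0 := by
  rw [sq_sum_norm_eq_sq_norm_sum_add_sum_sum_schwarzDefect 𝕜,
    sum_sum_eq_two_mul_sum_sum_ite_lt s _ (fun i j => schwarzDefect_comm 𝕜 _ _)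
      (fun i => schwarzDefect_self 𝕜 _)]

end SchwarzDefect

theorem stmt_7_general {𝕜 H : Type*} [RCLike 𝕜] [NormedAddCommGroup H] [InnerProductSpace 𝕜 H]
    (n : ℕ) (x : ℕ → H) (δ : ℕ → ℕ → ℝ)
    (h : ∀ i ∈ Finset.Icc 1 n, ∀ j ∈ Finset.Icc 1 n, i < j →
      δ i j ≤ ‖x i‖ * ‖x j‖ - RCLike.re (inner 𝕜 (x i) (x j) : 𝕜)) :
    (∑ i ∈ Finset.Icc 1 n, ‖x i‖) ^ 2 ≥ ‖∑ i ∈ Finset.Icc 1 n, x i‖ ^ 2 +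
      2 * ∑ i ∈ Finset.Icc 1 n, ∑ j ∈ Finset.Icc 1 n,
        (if i < j then δ i j else 0) := by
  rw [ge_iff_le, sq_sum_norm_eq_sq_norm_sum_add_two_mul 𝕜]
  gcongr with i hi j hj
  split_ifs with hij
  exacts [h i hi j hj hij, le_rfl]

theorem stmt_7 {𝕜 H : Type*} [RCLike 𝕜] [NormedAddCommGroup H] [InnerProductSpace 𝕜 H]
    (n : ℕ) (x : ℕ → H) (δ : ℕ → ℕ → ℝ)
    (hδ : ∀ i ∈ Finset.Icc 1 n, ∀ j ∈ Finset.Icc 1 n, i < j → 0 ≤ δ i j)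
    (h : ∀ i ∈ Finset.Icc 1 n, ∀ j ∈ Finset.Icc 1 n, i < j →
      δ i j ≤ ‖x i‖ * ‖x j‖ - RCLike.re (inner 𝕜 (x i) (x j) : 𝕜)) :
    (∑ i ∈ Finset.Icc 1 n, ‖x i‖) ^ 2 ≥ ‖∑ i ∈ Finset.Icc 1 n, x i‖ ^ 2 +
      2 * ∑ i ∈ Finset.Icc 1 n, ∑ j ∈ Finset.Icc 1 n,
        (if i < j then δ i j else 0) :=
  stmt_7_general n x δ h
end

section
/- Let H be an inner product space and x_1,…,x_n ∈ H. With the forward differences Δx_k := x_{k+1} − x_k for k = 1,…,n−1, one has (∑_{i=1}^n ‖x_i‖)² ≤ ‖∑_{i=1}^n x_i‖² + (n(n−1)/2) (∑_{k=1}^{n−1} ‖Δx_k‖)². -/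
/-!
Expanding both squares as double sums, the `(i, j)` term of the difference is
`‖xᵢ‖‖xⱼ‖ - re ⟪xᵢ, xⱼ⟫ ≤ ‖xᵢ - xⱼ‖² / 2`, which vanishes on the diagonal. Off the diagonal,
the triangle inequality along the chain `xᵢ, xᵢ₊₁, …, xⱼ` bounds `‖xᵢ - xⱼ‖` by `∑ ‖Δxₖ‖`,
and there are `n (n - 1)` such ordered pairs.
-/

open Finset RCLike

section InnerProduct

variable {𝕜 E : Type*} [RCLike 𝕜] [SeminormedAddCommGroup E] [InnerProductSpace 𝕜 E]

theorem norm_mul_norm_le_re_inner_add (x y : E) :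
    ‖x‖ * ‖y‖ ≤ re (inner 𝕜 x y) + ‖x - y‖ ^ 2 / 2 := by
  nlinarith [norm_sub_sq (𝕜 := 𝕜) x y, sq_nonneg (‖x‖ - ‖y‖)]

theorem norm_sum_sq_eq_sum_sum_re_inner {ι : Type*} (s : Finset ι) (x : ι → E) :
    ‖∑ i ∈ s, x i‖ ^ 2 = ∑ i ∈ s, ∑ j ∈ s, re (inner 𝕜 (x i) (x j)) := by
  rw [← inner_self_eq_norm_sq (𝕜 := 𝕜), sum_inner]
  simp only [inner_sum, map_sum]

end InnerProduct

theorem sq_sum_norm_le_norm_sum_sq_add (𝕜 : Type*) {E ι : Type*} [RCLike 𝕜]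
    [SeminormedAddCommGroup E] [InnerProductSpace 𝕜 E] (s : Finset ι) (x : ι → E) :
    (∑ i ∈ s, ‖x i‖) ^ 2 ≤
      ‖∑ i ∈ s, x i‖ ^ 2 + (∑ i ∈ s, ∑ j ∈ s, ‖x i - x j‖ ^ 2) / 2 := by
  rw [norm_sum_sq_eq_sum_sum_re_inner (𝕜 := 𝕜), sum_div, ← sum_add_distrib, sq, sum_mul_sum]
  refine sum_le_sum fun i _ => ?_
  rw [sum_div, ← sum_add_distrib]
  exact sum_le_sum fun j _ => norm_mul_norm_le_re_inner_add (x i) (x j)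

theorem sum_sum_le_of_diag_eq_zero {ι : Type*} (s : Finset ι) (f : ι → ι → ℝ) {C : ℝ}
    (hdiag : ∀ i ∈ s, f i i = 0) (hle : ∀ i ∈ s, ∀ j ∈ s, f i j ≤ C) :
    ∑ i ∈ s, ∑ j ∈ s, f i j ≤ #s * (#s - 1) * C := by
  classical
  have hrow : ∀ i ∈ s, ∑ j ∈ s, f i j ≤ (#s - 1) * C := fun i hi => by
    rw [← sum_erase s (hdiag i hi)]
    calc ∑ j ∈ s.erase i, f i j ≤ #(s.erase i) • C :=
          sum_le_card_nsmul _ _ _ fun j hj => hle i hi j (mem_of_mem_erase hj)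
      _ = (#s - 1) * C := by
          rw [nsmul_eq_mul, card_erase_of_mem hi, Nat.cast_sub (card_pos.mpr ⟨i, hi⟩),
            Nat.cast_one]
  calc ∑ i ∈ s, ∑ j ∈ s, f i j ≤ #s • ((#s - 1) * C) := sum_le_card_nsmul _ _ _ hrow
    _ = #s * (#s - 1) * C := by rw [nsmul_eq_mul, mul_assoc]

theorem dist_le_sum_dist_of_mem_Icc {α : Type*} [PseudoMetricSpace α] (f : ℕ → α) {a b i j : ℕ}
    (hi : i ∈ Icc a b) (hj : j ∈ Icc a b) :
    dist (f i) (f j) ≤ ∑ k ∈ Ico a b, dist (f k) (f (k + 1)) := by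
  wlog hij : i ≤ j generalizing i j
  · rw [dist_comm]; exact this hj hi (le_of_not_ge hij)
  rw [mem_Icc] at hi hj
  refine (dist_le_Ico_sum_dist f hij).trans <|
    sum_le_sum_of_subset_of_nonneg (Ico_subset_Ico hi.1 hj.2) fun _ _ _ => dist_nonneg

theorem stmt_10 {𝕜 H : Type*} [RCLike 𝕜] [NormedAddCommGroup H] [InnerProductSpace 𝕜 H]
    (n : ℕ) (x : ℕ → H) :
    (∑ i ∈ Finset.Icc 1 n, ‖x i‖) ^ 2 ≤ ‖∑ i ∈ Finset.Icc 1 n, x i‖ ^ 2 +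
      ((n : ℝ) * (n - 1) / 2) *
        (∑ k ∈ Finset.Icc 1 (n - 1), ‖x (k + 1) - x k‖) ^ 2 := by
  set S := ∑ k ∈ Icc 1 (n - 1), ‖x (k + 1) - x k‖ with hS_def
  have hS : S = ∑ k ∈ Ico 1 n, dist (x k) (x (k + 1)) := by
    rw [hS_def, show Icc 1 (n - 1) = Ico 1 n by ext; simp only [mem_Icc, mem_Ico]; omega]
    simp only [dist_eq_norm, norm_sub_rev]
  have hpair : ∀ i ∈ Icc 1 n, ∀ j ∈ Icc 1 n, ‖x i - x j‖ ^ 2 ≤ S ^ 2 := fun i hi j hj => by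
    gcongr
    rw [← dist_eq_norm, hS]
    exact dist_le_sum_dist_of_mem_Icc x hi hj
  have hsum := sum_sum_le_of_diag_eq_zero _ _ (fun i _ => by simp) hpair
  rw [Nat.card_Icc, Nat.add_sub_cancel] at hsum
  linarith [sq_sum_norm_le_norm_sum_sq_add 𝕜 (Icc 1 n) x]
end

section
/- Let H be an inner product space and x_1,…,x_n ∈ H. Then (∑_{i=1}^n ‖x_i‖)² ≤ ‖∑_{i=1}^n x_i‖² + (n(n²−1)/6) · ∑_{k=1}^{n−1} ‖Δx_k‖², where Δx_k := x_{k+1} − x_k. -/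
/-!
The (i, j) term of the double sum (∑ ‖xᵢ‖)² − ‖∑ xᵢ‖² is ‖xᵢ‖‖xⱼ‖ − Re⟪xᵢ, xⱼ⟫ ≤ ‖xᵢ − xⱼ‖² / 2.
Writing xⱼ − xᵢ as a telescoping sum of |i − j| increments, Cauchy–Schwarz gives
‖xᵢ − xⱼ‖² ≤ |i − j| ∑ₖ ‖Δxₖ‖², and ∑_{i,j} |i − j| = n(n² − 1)/3.
-/

open Finset RCLike

theorem sum_Icc_one_natCast (n : ℕ) : ∑ i ∈ Icc 1 n, (i : ℝ) = n * (n + 1) / 2 := by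
  induction n with
  | zero => simp
  | succ n ih =>
    rw [sum_Icc_succ_top (by omega), ih]
    push_cast
    ring

theorem sum_Icc_sum_Icc_abs_sub (n : ℕ) :
    ∑ i ∈ Icc 1 n, ∑ j ∈ Icc 1 n, |(i : ℝ) - j| = n * ((n : ℝ) ^ 2 - 1) / 3 := by
  induction n with
  | zero => simp
  | succ n ih =>
    have hlast : ∀ i ∈ Icc 1 n, |(i : ℝ) - (n + 1 : ℕ)| = n + 1 - i := fun i hi => by
      rw [abs_sub_comm, abs_of_nonneg] <;> push_cast
      · ring
      · linarith [show (i : ℝ) ≤ n by exact_mod_cast (mem_Icc.1 hi).2]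
    simp only [sum_Icc_succ_top (show 1 ≤ n + 1 by omega), sum_add_distrib, ih,
      sum_congr rfl hlast, abs_sub_comm ((n + 1 : ℕ) : ℝ), sum_sub_distrib, sum_const,
      Nat.card_Icc, sum_Icc_one_natCast, sub_self, abs_zero]
    push_cast
    ring

theorem norm_sub_sq_le_mul_sum_norm_sub_sq {E : Type*} [SeminormedAddCommGroup E] (x : ℕ → E)
    {i j : ℕ} (hij : i ≤ j) :
    ‖x j - x i‖ ^ 2 ≤ ((j : ℝ) - i) * ∑ k ∈ Ico i j, ‖x (k + 1) - x k‖ ^ 2 := by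
  rw [← sum_Ico_sub x hij]
  calc ‖∑ k ∈ Ico i j, (x (k + 1) - x k)‖ ^ 2
      ≤ (∑ k ∈ Ico i j, ‖x (k + 1) - x k‖) ^ 2 := by gcongr; exact norm_sum_le _ _
    _ ≤ #(Ico i j) * ∑ k ∈ Ico i j, ‖x (k + 1) - x k‖ ^ 2 := sq_sum_le_card_mul_sum_sq
    _ = ((j : ℝ) - i) * ∑ k ∈ Ico i j, ‖x (k + 1) - x k‖ ^ 2 := by
      rw [Nat.card_Ico, Nat.cast_sub hij]

theorem norm_sub_sq_le_abs_mul_sum_norm_sub_sq {E : Type*} [SeminormedAddCommGroup E]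
    (x : ℕ → E) {n i j : ℕ} (hi : i ∈ Icc 1 n) (hj : j ∈ Icc 1 n) :
    ‖x i - x j‖ ^ 2 ≤ |(i : ℝ) - j| * ∑ k ∈ Icc 1 (n - 1), ‖x (k + 1) - x k‖ ^ 2 := by
  wlog hij : i ≤ j generalizing i j
  · rw [norm_sub_rev, abs_sub_comm]
    exact this hj hi (by omega)
  rw [norm_sub_rev, abs_sub_comm, abs_of_nonneg (by simpa using hij)]
  refine (norm_sub_sq_le_mul_sum_norm_sub_sq x hij).trans ?_
  gcongr
  · simpa using hij
  · intro k hk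
    simp only [mem_Ico, mem_Icc] at hi hj hk ⊢
    omega

section InnerProduct

variable {𝕜 E : Type*} [RCLike 𝕜] [SeminormedAddCommGroup E] [InnerProductSpace 𝕜 E]

theorem norm_mul_norm_sub_re_inner_le (a b : E) :
    ‖a‖ * ‖b‖ - re (inner 𝕜 a b) ≤ ‖a - b‖ ^ 2 / 2 := by
  rw [@norm_sub_sq 𝕜]
  nlinarith [sq_nonneg (‖a‖ - ‖b‖)]

theorem sq_sum_norm_sub_sq_norm_sum {ι : Type*} (s : Finset ι) (x : ι → E) :
    (∑ i ∈ s, ‖x i‖) ^ 2 - ‖∑ i ∈ s, x i‖ ^ 2 =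
      ∑ i ∈ s, ∑ j ∈ s, (‖x i‖ * ‖x j‖ - re (inner 𝕜 (x i) (x j))) := by
  rw [sq, sq, sum_mul_sum, ← @inner_self_eq_norm_mul_norm 𝕜, sum_inner, map_sum,
    ← sum_sub_distrib]
  simp only [inner_sum, map_sum, sum_sub_distrib]

end InnerProduct

theorem stmt_13 {𝕜 H : Type*} [RCLike 𝕜] [NormedAddCommGroup H] [InnerProductSpace 𝕜 H]
    (n : ℕ) (x : ℕ → H) :
    (∑ i ∈ Finset.Icc 1 n, ‖x i‖) ^ 2 ≤ ‖∑ i ∈ Finset.Icc 1 n, x i‖ ^ 2 +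
      ((n : ℝ) * ((n : ℝ) ^ 2 - 1) / 6) *
        ∑ k ∈ Finset.Icc 1 (n - 1), ‖x (k + 1) - x k‖ ^ 2 := by
  set S := ∑ k ∈ Icc 1 (n - 1), ‖x (k + 1) - x k‖ ^ 2
  have hterm : ∀ i ∈ Icc 1 n, ∀ j ∈ Icc 1 n,
      ‖x i‖ * ‖x j‖ - re (inner 𝕜 (x i) (x j)) ≤ |(i : ℝ) - j| / 2 * S :=
    fun i hi j hj =>
    calc _ ≤ ‖x i - x j‖ ^ 2 / 2 := norm_mul_norm_sub_re_inner_le _ _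
      _ ≤ |(i : ℝ) - j| * S / 2 := by
        gcongr; exact norm_sub_sq_le_abs_mul_sum_norm_sub_sq x hi hj
      _ = _ := by ring
  have hsum := sum_le_sum fun i hi => sum_le_sum fun j hj => hterm i hi j hj
  rw [← sq_sum_norm_sub_sq_norm_sum] at hsum
  simp only [← sum_mul, ← sum_div, sum_Icc_sum_Icc_abs_sub] at hsum
  linarith
end
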